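/- Let g ≥ 1 be an integer and let Z be a symmetric g×g complex matrix whose imaginary part is positive definite. Then the Riemann theta function z ↦ θ(z; Z) = Σ_{n ∈ ℤ^g} exp(πi·ᵗn·Z·n + 2πi·ᵗn·z) is holomorphic on all of ℂ^g, i.e., the map (Fin g → ℂ) → ℂ given by this sum is ℂ-differentiable at every point. -/

import Mathlib

/-- The Riemann theta function attached to a `g × g` complex matrix `Z`. -/
noncomputable def riemannTheta {g : ℕ} (Z : Matrix (Fin g) (Fin g) ℂ)
    (z : Fin g → ℂ) : ℂ :=
  ∑' n : Fin g → ℤ,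
    Complex.exp ((Real.pi : ℂ) * Complex.I * (∑ j, ∑ k, (n j : ℂ) * Z j k * (n k : ℂ)) +
      2 * (Real.pi : ℂ) * Complex.I * (∑ j, (n j : ℂ) * z j))

/-!
Positive definiteness of `Im Z` gives `c > 0` with `Im (ᵗn Z n) ≥ c |n|²`. Hence on the ball
`‖z‖ < R` the `n`-th term of the series is bounded by `∏ⱼ exp (-π (c nⱼ² - 2R |nⱼ|))`, and its
derivative, which only carries an extra factor `2π ∑ⱼ |nⱼ| ≤ exp (2π ∑ⱼ |nⱼ|)`, by the same
product with `R + 1` in place of `R`. These products of one-variable Jacobi theta majorants are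
summable over `ℤ^g`, so the series may be differentiated termwise.
-/

open Complex Finset Matrix Metric
open scoped Real

section
variable {ι : Type*} [Fintype ι]

theorem summable_pi_prod_of_nonneg {κ : ι → Type*} {f : ∀ i, κ i → ℝ} (hf : ∀ i b, 0 ≤ f i b)
    (hs : ∀ i, Summable (f i)) : Summable fun x : (∀ i, κ i) => ∏ i, f i (x i) := by
  classical
  refine summable_of_sum_le (c := ∏ i, ∑' b, f i b)
    (fun x => prod_nonneg fun i _ => hf i (x i)) fun s => ?_
  calc ∑ x ∈ s, ∏ i, f i (x i)
      ≤ ∑ x ∈ Fintype.piFinset fun i => s.image (· i), ∏ i, f i (x i) :=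
        sum_le_sum_of_subset_of_nonneg
          (fun x hx => Fintype.mem_piFinset.2 fun i => mem_image_of_mem _ hx)
          fun x _ _ => prod_nonneg fun i _ => hf i (x i)
    _ = ∏ i, ∑ b ∈ s.image (· i), f i b := (prod_univ_sum _ _).symm
    _ ≤ ∏ i, ∑' b, f i b :=
        prod_le_prod (fun i _ => sum_nonneg fun b _ => hf i b)
          fun i _ => (hs i).sum_le_tsum _ fun b _ => hf i b

theorem Matrix.PosDef.exists_pos_mul_dotProduct_self_le {M : Matrix ι ι ℝ} (hM : M.PosDef) :
    ∃ c > 0, ∀ x : ι → ℝ, c * (x ⬝ᵥ x) ≤ x ⬝ᵥ (M *ᵥ x) := by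
  set q : EuclideanSpace ℝ ι → ℝ := fun y => y.ofLp ⬝ᵥ (M *ᵥ y.ofLp)
  have hq : Continuous q := by fun_prop
  have hpos : ∀ y ∈ sphere (0 : EuclideanSpace ℝ ι) 1, 0 < q y := fun y hy => by
    have hy0 : y.ofLp ≠ 0 := by simpa using ne_of_mem_sphere hy one_ne_zero
    simpa using hM.dotProduct_mulVec_pos hy0
  obtain ⟨c, hc, hcq⟩ := (isCompact_sphere 0 1).exists_forall_le' hq.continuousOn hpos
  refine ⟨c, hc, fun x => ?_⟩
  rcases eq_or_ne x 0 with rfl | hx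
  · simp
  set y := WithLp.toLp 2 x
  have hy : 0 < ‖y‖ := by simpa [y] using hx
  have hq_smul : ∀ t : ℝ, q (t • y) = t ^ 2 * q y := fun t => by
    simp only [q, WithLp.ofLp_smul, mulVec_smul, smul_dotProduct, dotProduct_smul, smul_eq_mul]
    ring
  have hxx : x ⬝ᵥ x = ‖y‖ ^ 2 := by
    rw [EuclideanSpace.real_norm_sq_eq]
    simp [y, dotProduct, sq]
  have hmin := hcq (‖y‖⁻¹ • y) (by simp [norm_smul, hy.ne'])
  rw [hq_smul] at hmin
  calc c * (x ⬝ᵥ x) = ‖y‖ ^ 2 * c := by rw [hxx, mul_comm]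
    _ ≤ ‖y‖ ^ 2 * (‖y‖⁻¹ ^ 2 * q y) := by gcongr
    _ = x ⬝ᵥ (M *ᵥ x) := by field_simp; rfl

noncomputable def latticePairing (n : ι → ℤ) : (ι → ℂ) →L[ℂ] ℂ :=
  ∑ j, (n j : ℂ) • ContinuousLinearMap.proj j

theorem latticePairing_apply (n : ι → ℤ) (z : ι → ℂ) :
    latticePairing n z = ∑ j, (n j : ℂ) * z j := by
  simp [latticePairing]

theorem norm_latticePairing_le (n : ι → ℤ) : ‖latticePairing n‖ ≤ ∑ j, |(n j : ℝ)| :=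
  ContinuousLinearMap.opNorm_le_bound _ (by positivity) fun z => by
    rw [latticePairing_apply, sum_mul]
    refine (norm_sum_le _ _).trans (sum_le_sum fun j _ => ?_)
    rw [norm_mul, norm_intCast]
    exact mul_le_mul_of_nonneg_left (norm_le_pi_norm z j) (abs_nonneg _)

theorem norm_two_pi_mul_I : ‖(2 * π * I : ℂ)‖ = 2 * π := by simp [Real.pi_pos.le]

-- `riemannTheta Z z` is definitionally `∑' n, riemannThetaTerm Z n z`.
noncomputable def riemannThetaTerm (Z : Matrix ι ι ℂ) (n : ι → ℤ) (z : ι → ℂ) : ℂ :=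
  exp ((π : ℂ) * I * (∑ j, ∑ k, (n j : ℂ) * Z j k * (n k : ℂ)) +
    2 * (π : ℂ) * I * (∑ j, (n j : ℂ) * z j))

theorem hasFDerivAt_riemannThetaTerm (Z : Matrix ι ι ℂ) (n : ι → ℤ) (z : ι → ℂ) :
    HasFDerivAt (riemannThetaTerm Z n)
      (riemannThetaTerm Z n z • (2 * π * I : ℂ) • latticePairing n) z := by
  have h : riemannThetaTerm Z n = fun w =>
      exp ((π : ℂ) * I * (∑ j, ∑ k, (n j : ℂ) * Z j k * (n k : ℂ)) +
        ((2 * π * I : ℂ) • latticePairing n) w) := by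
    ext w
    simp [riemannThetaTerm, latticePairing_apply]
  rw [h]
  exact ((((2 * π * I : ℂ) • latticePairing n).hasFDerivAt).const_add _).cexp

noncomputable def thetaMajorant (c S : ℝ) (n : ι → ℤ) : ℝ :=
  ∏ j, Real.exp (-π * (c * (n j : ℝ) ^ 2 - 2 * S * |(n j : ℝ)|))

theorem summable_thetaMajorant {c : ℝ} (hc : 0 < c) (S : ℝ) :
    Summable (thetaMajorant (ι := ι) c S) :=
  summable_pi_prod_of_nonneg
    (f := fun _ (m : ℤ) => Real.exp (-π * (c * (m : ℝ) ^ 2 - 2 * S * |(m : ℝ)|)))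
    (fun _ _ => (Real.exp_pos _).le) fun _ => by
      simpa only [pow_zero, one_mul, Int.cast_abs] using
        summable_pow_mul_jacobiTheta₂_term_bound S hc 0

theorem thetaMajorant_mul_exp (c S : ℝ) (n : ι → ℤ) :
    thetaMajorant c S n * Real.exp (2 * π * ∑ j, |(n j : ℝ)|) = thetaMajorant c (S + 1) n := by
  rw [mul_sum, Real.exp_sum, thetaMajorant, thetaMajorant, ← prod_mul_distrib]
  refine prod_congr rfl fun j _ => ?_
  rw [← Real.exp_add]
  ring_nf

theorem im_sum_sum_intCast_mul_mul (Z : Matrix ι ι ℂ) (n : ι → ℤ) :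
    (∑ j, ∑ k, (n j : ℂ) * Z j k * (n k : ℂ)).im =
      (fun j => (n j : ℝ)) ⬝ᵥ (Z.map im *ᵥ fun j => (n j : ℝ)) := by
  simp only [im_sum, dotProduct, mulVec, mul_sum, map_apply]
  refine sum_congr rfl fun j _ => sum_congr rfl fun k _ => ?_
  simp only [mul_im, intCast_re, intCast_im]
  ring

theorem norm_riemannThetaTerm_le {Z : Matrix ι ι ℂ} {c R : ℝ}
    (hZ : ∀ x, c * (x ⬝ᵥ x) ≤ x ⬝ᵥ (Z.map im *ᵥ x)) (n : ι → ℤ) {z : ι → ℂ} (hz : ‖z‖ ≤ R) :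
    ‖riemannThetaTerm Z n z‖ ≤ thetaMajorant c R n := by
  set x : ι → ℝ := fun j => (n j : ℝ)
  have hquad :
      ((π : ℂ) * I * ∑ j, ∑ k, (n j : ℂ) * Z j k * (n k : ℂ)).re ≤ -π * c * (x ⬝ᵥ x) := by
    rw [show ∀ w : ℂ, ((π : ℂ) * I * w).re = -π * w.im from fun w => by simp [mul_re],
      im_sum_sum_intCast_mul_mul]
    nlinarith [hZ x, Real.pi_pos]
  have hlin : (2 * (π : ℂ) * I * ∑ j, (n j : ℂ) * z j).re ≤ 2 * π * R * ∑ j, |x j| :=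
    calc _ ≤ ‖2 * (π : ℂ) * I * latticePairing n z‖ := by
          rw [latticePairing_apply]; exact re_le_norm _
      _ ≤ 2 * π * (‖latticePairing n‖ * ‖z‖) := by
          rw [norm_mul, norm_two_pi_mul_I]; gcongr; exact (latticePairing n).le_opNorm z
      _ ≤ 2 * π * ((∑ j, |x j|) * R) := by gcongr; exact norm_latticePairing_le n
      _ = 2 * π * R * ∑ j, |x j| := by ring
  rw [riemannThetaTerm, norm_exp, thetaMajorant, ← Real.exp_sum, Real.exp_le_exp, add_re]
  calc _ ≤ -π * c * (x ⬝ᵥ x) + 2 * π * R * ∑ j, |x j| := add_le_add hquad hlin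
    _ = _ := by
      simp only [dotProduct, mul_sum, ← sum_add_distrib]
      exact sum_congr rfl fun j _ => by ring

theorem summable_riemannThetaTerm {Z : Matrix ι ι ℂ} {c : ℝ} (hc : 0 < c)
    (hZ : ∀ x, c * (x ⬝ᵥ x) ≤ x ⬝ᵥ (Z.map im *ᵥ x)) (z : ι → ℂ) :
    Summable fun n => riemannThetaTerm Z n z :=
  (summable_thetaMajorant hc ‖z‖).of_norm_bounded fun n => norm_riemannThetaTerm_le hZ n le_rfl

theorem norm_riemannThetaTerm_smul_le {Z : Matrix ι ι ℂ} {c R : ℝ}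
    (hZ : ∀ x, c * (x ⬝ᵥ x) ≤ x ⬝ᵥ (Z.map im *ᵥ x)) (n : ι → ℤ) {z : ι → ℂ} (hz : ‖z‖ ≤ R) :
    ‖riemannThetaTerm Z n z • (2 * π * I : ℂ) • latticePairing n‖ ≤ thetaMajorant c (R + 1) n := by
  rw [← thetaMajorant_mul_exp, norm_smul, norm_smul, norm_two_pi_mul_I]
  refine mul_le_mul (norm_riemannThetaTerm_le hZ n hz) ?_ (by positivity)
    (prod_nonneg fun _ _ => (Real.exp_pos _).le)
  calc 2 * π * ‖latticePairing n‖ ≤ 2 * π * ∑ j, |(n j : ℝ)| := by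
        gcongr; exact norm_latticePairing_le n
    _ ≤ _ := (Real.add_one_le_exp _).trans' (le_add_of_nonneg_right zero_le_one)

end

theorem riemannTheta_differentiable_general (g : ℕ)
    (Z : Matrix (Fin g) (Fin g) ℂ)
    (hZim : (Z.map Complex.im).PosDef) :
    Differentiable ℂ (fun z : Fin g → ℂ => riemannTheta Z z) := by
  obtain ⟨c, hc, hZ⟩ := hZim.exists_pos_mul_dotProduct_self_le
  intro z₀
  have hz₀ : z₀ ∈ ball (0 : Fin g → ℂ) (‖z₀‖ + 1) := by simp
  exact (hasFDerivAt_tsum_of_isPreconnected (summable_thetaMajorant hc (‖z₀‖ + 1 + 1))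
    isOpen_ball (convex_ball _ _).isPreconnected
    (fun n z _ => hasFDerivAt_riemannThetaTerm Z n z)
    (fun n z hz => norm_riemannThetaTerm_smul_le hZ n (mem_ball_zero_iff.1 hz).le)
    hz₀ (summable_riemannThetaTerm hc hZ z₀) hz₀).differentiableAt

theorem riemannTheta_differentiable (g : ℕ) (hg : 1 ≤ g)
    (Z : Matrix (Fin g) (Fin g) ℂ) (hZsymm : Z.IsSymm)
    (hZim : (Z.map Complex.im).PosDef) :
    Differentiable ℂ (fun z : Fin g → ℂ => riemannTheta Z z) :=
  riemannTheta_differentiable_general g Z hZim
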